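/- For integers a, b, k with k ≥ b > a ≥ 1 and m ≥ 1: Σ_{λ ∈ BD_{a,b,k}(m)} u^{ℓ_a(λ)} v^{ℓ_b(λ)} q^{|λ|} = Σ_{h=0}^{m} u^{m−h} v^{h} q^{k·C(m,2) + k·C(h,2) + ma + (b−a)h} [m choose h]_k. -/

import Mathlib

/-- The finite q-Pochhammer symbol `(t;q)_n = ∏_{i=0}^{n-1} (1 - t qⁱ)`. -/
noncomputable def qPoch (t q : ℂ) (n : ℕ) : ℂ := ∏ i ∈ Finset.range n, (1 - t * q ^ i)

/-- The infinite q-Pochhammer symbol `(t;q)_∞ = ∏_{i≥0} (1 - t qⁱ)`. -/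
noncomputable def qPochInf (t q : ℂ) : ℂ := ∏' i : ℕ, (1 - t * q ^ i)

/-- The Gaussian binomial coefficient `[A choose B]` in base `q`:
`(q;q)_A / ((q;q)_B (q;q)_{A-B})` for `A ≥ B ≥ 0`, and `0` otherwise. -/
noncomputable def gbinom (q : ℂ) (A B : ℕ) : ℂ :=
  if B ≤ A then qPoch q q A / (qPoch q q B * qPoch q q (A - B)) else 0

/-- `lcount k c l` is the number of parts of `l` congruent to `c` modulo `k`. -/
def lcount (k c : ℕ) (l : List ℕ) : ℕ := (l.filter (fun x => x % k = c % k)).length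

/-- Membership in `BD_{a,b,k}(m)`: partitions `(λ_1,…,λ_m)` with exactly `m` parts, each
`≡ a` or `b (mod k)`, `λ_m ∈ {a, b}`, and for consecutive parts:
`λ_i - λ_{i+1} ≥ k` with strict inequality if `λ_i ≡ b (mod k)`, and
`λ_i - λ_{i+1} ≤ 2k` with strict inequality if `λ_{i+1} ≡ a (mod k)`. -/
def memBD (a b k m : ℕ) (l : List ℕ) : Prop :=
  l.Pairwise (· ≥ ·) ∧ l.length = m ∧
    (∀ x ∈ l, 0 < x ∧ (x % k = a % k ∨ x % k = b % k)) ∧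
    (l.getLast? = some a ∨ l.getLast? = some b) ∧
    l.Chain' (fun x y => (y + k ≤ x ∧ (x % k = b % k → y + k < x)) ∧
      (x ≤ y + 2 * k ∧ (y % k = a % k → x < y + 2 * k)))

/-!
A partition in `BD_{a,b,k}(m)` is determined by the set `S` of positions, counted from the largest
part, of its parts `≡ b`, and every `S ⊆ {0, …, m-1}` occurs: the gap conditions confine the
difference of two consecutive parts to a window of length less than `k`, in which their residues
fix it. Each part adds `k` to every larger part, and `2k` if it is `≡ b`, so
`|λ| = Σ_{i ∉ S} (a + k i) + Σ_{i ∈ S} (b + 2 k i)` and the generating function is the product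
`∏_{i<m} (u q^{a+ki} + v q^{b+2ki}) = q^{k C(m,2)} ∏_{i<m} (u q^a + v q^b (q^k)^i)`.
The q-binomial theorem expands it, through `Σ_{|S| = h} Q^{Σ S} = Q^{C(h,2)} [m choose h]_Q`.
-/

open Finset

lemma qPoch_succ (Q : ℂ) (n : ℕ) : qPoch Q Q (n + 1) = qPoch Q Q n * (1 - Q ^ (n + 1)) := by
  rw [qPoch, prod_range_succ, ← qPoch, pow_succ']

lemma qPoch_ne_zero {Q : ℂ} (hQ : ‖Q‖ < 1) (n : ℕ) : qPoch Q Q n ≠ 0 := by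
  refine prod_ne_zero_iff.mpr fun i _ h => ?_
  have hpow : Q ^ (i + 1) = 1 := by rw [pow_succ']; linear_combination -h
  have := pow_lt_one₀ (norm_nonneg Q) hQ i.succ_ne_zero
  rw [← norm_pow, hpow, norm_one] at this
  exact this.false

lemma sum_powersetCard_succ_range_succ {R : Type*} [CommSemiring R] (Q : R) (m h : ℕ) :
    ∑ S ∈ (range (m + 1)).powersetCard (h + 1), Q ^ (∑ i ∈ S, i)
      = ∑ S ∈ (range m).powersetCard (h + 1), Q ^ (∑ i ∈ S, i)
        + Q ^ m * ∑ S ∈ (range m).powersetCard h, Q ^ (∑ i ∈ S, i) := by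
  have hm : m ∉ range m := by simp
  rw [range_add_one, powersetCard_succ_insert hm, sum_union, sum_image, mul_sum]
  · congr 1
    refine sum_congr rfl fun S hS => ?_
    rw [sum_insert fun h => hm ((mem_powersetCard.mp hS).1 h), pow_add]
  · exact insert_erase_invOn.2.injOn.mono fun S hS => notMem_mono (mem_powersetCard.1 hS).1 hm
  · simp only [disjoint_left, mem_image, not_exists, not_and]
    intro S hS T _ hTS
    exact hm ((mem_powersetCard.mp hS).1 (hTS ▸ mem_insert_self m T))

lemma sum_powersetCard_range_mul_qPoch (Q : ℂ) (h n : ℕ) :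
    (∑ S ∈ (range (h + n)).powersetCard h, Q ^ (∑ i ∈ S, i)) * (qPoch Q Q h * qPoch Q Q n)
      = Q ^ h.choose 2 * qPoch Q Q (h + n) := by
  induction h generalizing n with
  | zero => simp [qPoch]
  | succ h ihh =>
    have hchoose : (h + 1).choose 2 = h.choose 2 + h := by
      rw [Nat.choose_succ_succ', Nat.choose_one_right, add_comm]
    induction n with
    | zero =>
      have hempty : (range h).powersetCard (h + 1) = ∅ := powersetCard_eq_empty.mpr (by simp)
      have := ihh 0
      rw [add_zero] at this ⊢
      rw [sum_powersetCard_succ_range_succ, hempty, sum_empty, zero_add, hchoose, qPoch_succ]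
      simp only [qPoch, range_zero, prod_empty] at this ⊢
      linear_combination (Q ^ h * (1 - Q ^ (h + 1))) * this
    | succ n ihn =>
      have hB := ihh (n + 1)
      rw [show h + 1 + (n + 1) = (h + 1 + n) + 1 by omega, sum_powersetCard_succ_range_succ,
        qPoch_succ Q (h + 1 + n), qPoch_succ Q n]
      rw [show h + (n + 1) = h + 1 + n by omega, qPoch_succ Q n] at hB
      rw [qPoch_succ Q h] at ihn ⊢
      rw [hchoose] at ihn ⊢
      linear_combination (1 - Q ^ (n + 1)) * ihn + (Q ^ (h + 1 + n) * (1 - Q ^ (h + 1))) * hB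

lemma sum_powersetCard_range_eq_gbinom {Q : ℂ} (hQ : ‖Q‖ < 1) {m h : ℕ} (hh : h ≤ m) :
    ∑ S ∈ (range m).powersetCard h, Q ^ (∑ i ∈ S, i) = Q ^ h.choose 2 * gbinom Q m h := by
  obtain ⟨n, rfl⟩ := Nat.exists_eq_add_of_le hh
  rw [gbinom, if_pos hh, Nat.add_sub_cancel_left]
  field_simp [qPoch_ne_zero hQ]
  rw [mul_assoc]
  exact sum_powersetCard_range_mul_qPoch Q h n

theorem prod_mul_pow_add_eq_sum_gbinom {Q : ℂ} (hQ : ‖Q‖ < 1) (U V : ℂ) (m : ℕ) :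
    ∏ i ∈ range m, (V * Q ^ i + U)
      = ∑ h ∈ range (m + 1), U ^ (m - h) * V ^ h * Q ^ h.choose 2 * gbinom Q m h := by
  rw [prod_add, sum_powerset, card_range]
  refine sum_congr rfl fun h hh => ?_
  have hterm : ∀ S ∈ (range m).powersetCard h,
      (∏ i ∈ S, V * Q ^ i) * ∏ _ ∈ range m \ S, U = U ^ (m - h) * V ^ h * Q ^ (∑ i ∈ S, i) := by
    intro S hS
    obtain ⟨hSm, rfl⟩ := mem_powersetCard.mp hS
    rw [prod_mul_distrib, prod_const, prod_const, prod_pow_eq_pow_sum, card_sdiff_of_subset hSm,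
      card_range]
    ring
  rw [sum_congr rfl hterm, ← mul_sum,
    sum_powersetCard_range_eq_gbinom hQ (Nat.lt_succ_iff.mp (mem_range.mp hh))]
  ring

lemma Nat.ModEq.eq_of_lt_add_of_lt_add {x y k : ℕ} (h : x ≡ y [MOD k]) (hx : x < y + k)
    (hy : y < x + k) : x = y :=
  h.eq_of_abs_lt (abs_sub_lt_iff.mpr ⟨by omega, by omega⟩)

lemma length_add_count_true_cons (c : Bool) (w : List Bool) :
    (c :: w).length + (c :: w).count true = w.length + w.count true + cond c 2 1 := by
  cases c <;> simp only [List.length_cons, List.count_cons_self, List.count_cons_of_ne, ne_eq,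
    Bool.false_eq_true, not_false_eq_true, cond_true, cond_false] <;> ring

lemma count_map_range {α : Type*} [DecidableEq α] (p : ℕ → α) (m : ℕ) (c : α) :
    ((List.range m).map p).count c = #{i ∈ range m | p i = c} := by
  rw [card_def, filter_val, range_val, Multiset.range, Multiset.filter_coe, Multiset.coe_card,
    ← List.countP_eq_length_filter, List.count, List.countP_map]
  rfl

lemma map_range_getD {α : Type*} (w : List α) (d : α) :
    (List.range w.length).map (fun i => w.getD i d) = w := by
  apply List.ext_getElem
  · simp
  · intro i _ hi
    simp [List.getElem?_eq_getElem hi]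

section BD

variable {a b k : ℕ}

/-- The partition of `BD_{a,b,k}` with residue word `w` (`true` marking a part `≡ b`), listed from
the largest part: a part exceeds its residue by `k` for every smaller part and once more for every
smaller part `≡ b`. -/
def bdOfWord (a b k : ℕ) : List Bool → List ℕ
  | [] => []
  | c :: w => (cond c b a + k * (w.length + w.count true)) :: bdOfWord a b k w

/-- The partition of `BD_{a,b,k}(m)` whose parts `≡ b` are those at the (0-based) positions in
`S`, counted from the largest part. -/
def bdOfFinset (a b k m : ℕ) (S : Finset ℕ) : List ℕ :=
  bdOfWord a b k ((List.range m).map (· ∈ S))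

/-- The relation between consecutive parts in `memBD`. -/
def BDGap (a b k x y : ℕ) : Prop :=
  (y + k ≤ x ∧ (x % k = b % k → y + k < x)) ∧ (x ≤ y + 2 * k ∧ (y % k = a % k → x < y + 2 * k))

lemma mod_ne_mod_of_lt (ha : 1 ≤ a) (hab : a < b) (hbk : b ≤ k) : a % k ≠ b % k := by
  rw [Nat.mod_eq_of_lt (by omega : a < k)]
  rcases hbk.lt_or_eq with hbk | rfl
  · rw [Nat.mod_eq_of_lt hbk]; omega
  · rw [Nat.mod_self]; omega

/-- The gap conditions confine `x - y` to a window of length less than `k`, inside which the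
residues of `x` and `y` determine it. -/
lemma bdGap_iff (ha : 1 ≤ a) (hab : a < b) (hbk : b ≤ k) {x y : ℕ} {c d : Bool}
    (hx : x % k = cond c b a % k) (hy : y % k = cond d b a % k) :
    BDGap a b k x y ↔ x + cond d b a = y + cond c b a + k * cond d 2 1 := by
  have hne := mod_ne_mod_of_lt ha hab hbk
  have hxb : x % k = b % k ↔ c = true := by rw [hx]; cases c <;> simp [hne]
  have hya : y % k = a % k ↔ d = false := by rw [hy]; cases d <;> simp [Ne.symm hne]
  have hmod : x + cond d b a ≡ y + cond c b a + k * cond d 2 1 [MOD k] := by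
    have hy' : y + cond c b a + k * cond d 2 1 ≡ cond d b a + cond c b a [MOD k] := by
      unfold Nat.ModEq; rw [Nat.add_mul_mod_self_left]; exact Nat.ModEq.add_right _ hy
    exact (Nat.ModEq.add_right _ hx).trans (by rw [add_comm]; exact hy'.symm)
  unfold BDGap
  rw [hxb, hya]
  constructor
  · intro hgap
    apply hmod.eq_of_lt_add_of_lt_add <;> cases c <;> cases d <;>
      simp only [Bool.false_eq_true, Bool.true_eq_false, IsEmpty.forall_iff, and_true, forall_const,
        cond_false, cond_true, mul_one] at hgap ⊢ <;> omega
  · intro heq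
    cases c <;> cases d <;>
      simp only [Bool.false_eq_true, Bool.true_eq_false, IsEmpty.forall_iff, and_true, forall_const,
        cond_false, cond_true, mul_one] at heq ⊢ <;> omega

lemma length_bdOfWord (w : List Bool) : (bdOfWord a b k w).length = w.length := by
  induction w with
  | nil => rfl
  | cons c w ih => simp [bdOfWord, ih]

lemma lcount_cond_bdOfWord (hne : a % k ≠ b % k) (c : Bool) (w : List Bool) :
    lcount k (cond c b a) (bdOfWord a b k w) = w.count c := by
  induction w with
  | nil => rfl
  | cons d w ih =>
    unfold lcount at ih ⊢
    cases c <;> cases d <;> simp only [cond_false, cond_true] at ih <;>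
      simp [bdOfWord, Nat.add_mul_mod_self_left, hne, Ne.symm hne, ih]

lemma map_residue_bdOfWord (hne : a % k ≠ b % k) (w : List Bool) :
    (bdOfWord a b k w).map (fun x => decide (x % k = b % k)) = w := by
  induction w with
  | nil => rfl
  | cons c w ih => cases c <;> simp [bdOfWord, Nat.add_mul_mod_self_left, hne, ih]

lemma isChain_bdOfWord (ha : 1 ≤ a) (hab : a < b) (hbk : b ≤ k) (w : List Bool) :
    (bdOfWord a b k w).IsChain (BDGap a b k) := by
  induction w with
  | nil => exact .nil
  | cons c w ih =>
    cases w with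
    | nil => exact .singleton _
    | cons d w =>
      refine .cons_cons ?_ ih
      rw [bdGap_iff ha hab hbk (Nat.add_mul_mod_self_left _ _ _) (Nat.add_mul_mod_self_left _ _ _)]
      rw [length_add_count_true_cons, mul_add]
      ring

lemma forall_mem_bdOfWord (ha : 1 ≤ a) (hab : a < b) (w : List Bool) :
    ∀ x ∈ bdOfWord a b k w, 0 < x ∧ (x % k = a % k ∨ x % k = b % k) := by
  induction w with
  | nil => simp [bdOfWord]
  | cons c w ih =>
    refine List.forall_mem_cons.mpr ⟨?_, ih⟩
    rw [Nat.add_mul_mod_self_left]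
    cases c <;> simp only [cond_false, cond_true, true_or, or_true, and_true] <;> omega

lemma getLast?_bdOfWord (w : List Bool) :
    (bdOfWord a b k w).getLast? = w.getLast?.map (cond · b a) := by
  induction w with
  | nil => rfl
  | cons c w ih =>
    cases w with
    | nil => simp [bdOfWord]
    | cons d w => simpa only [bdOfWord, List.getLast?_cons_cons] using ih

lemma memBD_bdOfWord (ha : 1 ≤ a) (hab : a < b) (hbk : b ≤ k) {w : List Bool} (hw : w ≠ []) :
    memBD a b k w.length (bdOfWord a b k w) := by
  have hchain := isChain_bdOfWord ha hab hbk w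
  refine ⟨List.isChain_iff_pairwise.mp (hchain.imp fun _ _ h => by unfold BDGap at h; omega),
    length_bdOfWord w, forall_mem_bdOfWord ha hab w, ?_, hchain⟩
  obtain ⟨c, hc⟩ := Option.ne_none_iff_exists'.mp (List.getLast?_eq_none_iff.not.mpr hw)
  rw [getLast?_bdOfWord, hc]
  cases c <;> simp

lemma mod_eq_cond_residue {x : ℕ} (hx : x % k = a % k ∨ x % k = b % k) :
    x % k = cond (decide (x % k = b % k)) b a % k := by
  by_cases hb : x % k = b % k
  · simp [hb]
  · simpa [hb] using hx

lemma bdOfWord_map_residue (ha : 1 ≤ a) (hab : a < b) (hbk : b ≤ k) {l : List ℕ}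
    (hres : ∀ x ∈ l, x % k = a % k ∨ x % k = b % k)
    (hlast : l.getLast? = some a ∨ l.getLast? = some b) (hchain : l.IsChain (BDGap a b k)) :
    bdOfWord a b k (l.map fun x => decide (x % k = b % k)) = l := by
  induction l with
  | nil => rfl
  | cons x l ih =>
    cases l with
    | nil =>
      have hne := mod_ne_mod_of_lt ha hab hbk
      simp only [List.getLast?_singleton, Option.some.injEq] at hlast
      rcases hlast with rfl | rfl <;> simp [bdOfWord, hne]
    | cons y l =>
      rw [List.isChain_cons_cons] at hchain
      have htail := ih (fun z hz => hres z (List.mem_cons_of_mem _ hz))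
        (by rwa [List.getLast?_cons_cons] at hlast) hchain.2
      rw [List.map_cons, bdOfWord, htail]
      congr 1
      have hgap := (bdGap_iff ha hab hbk (mod_eq_cond_residue (hres x List.mem_cons_self))
        (mod_eq_cond_residue (hres y (List.mem_cons_of_mem _ List.mem_cons_self)))).mp hchain.1
      have hy := (List.cons_eq_cons.mp htail).1
      rw [List.map_cons, length_add_count_true_cons, mul_add]
      beta_reduce at hy ⊢
      omega

lemma sum_bdOfWord_map_range (p : ℕ → Bool) (m : ℕ) :
    (bdOfWord a b k ((List.range m).map p)).sum
      = ∑ i ∈ range m, cond (p i) (b + 2 * k * i) (a + k * i) := by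
  induction m generalizing p with
  | zero => rfl
  | succ m ih =>
    have hshift : ∀ i, cond (p (i + 1)) (b + 2 * k * (i + 1)) (a + k * (i + 1))
        = cond (p (i + 1)) (b + 2 * k * i) (a + k * i) + (k + k * if p (i + 1) then 1 else 0) := by
      intro i
      cases p (i + 1) <;>
        simp only [cond_false, cond_true, Bool.false_eq_true, ↓reduceIte, mul_zero, mul_one,
          add_zero] <;> ring
    rw [List.range_succ_eq_map, List.map_cons, List.map_map, bdOfWord, List.sum_cons, ih,
      sum_range_succ', List.length_map, List.length_range, count_map_range, card_filter,
      sum_congr rfl fun i _ => hshift i, sum_add_distrib, sum_add_distrib, ← mul_sum]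
    simp only [Function.comp_apply, sum_boole, Nat.cast_id, sum_const, card_range, smul_eq_mul,
      mul_zero, add_zero]
    ring

lemma weight_bdOfFinset (hne : a % k ≠ b % k) {m : ℕ} {S : Finset ℕ} (hS : S ⊆ range m)
    (q u v : ℂ) :
    u ^ lcount k a (bdOfFinset a b k m S) * v ^ lcount k b (bdOfFinset a b k m S) *
        q ^ (bdOfFinset a b k m S).sum
      = (∏ i ∈ S, v * q ^ (b + 2 * k * i)) * ∏ i ∈ range m \ S, u * q ^ (a + k * i) := by
  have hin : {i ∈ range m | i ∈ S} = S := by rw [filter_mem_eq_inter, inter_eq_right.mpr hS]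
  have hout : {i ∈ range m | i ∉ S} = range m \ S := filter_notMem_eq_sdiff
  have hla : lcount k a (bdOfFinset a b k m S) = _ := lcount_cond_bdOfWord hne false _
  have hlb : lcount k b (bdOfFinset a b k m S) = _ := lcount_cond_bdOfWord hne true _
  rw [hla, hlb, bdOfFinset, sum_bdOfWord_map_range, count_map_range, count_map_range]
  simp only [Bool.cond_decide, sum_ite, decide_eq_false_iff_not, decide_eq_true_eq, hin, hout]
  rw [prod_mul_distrib, prod_mul_distrib, prod_const, prod_const, prod_pow_eq_pow_sum,
    prod_pow_eq_pow_sum, pow_add]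
  ring

lemma bdOfWord_injective (hne : a % k ≠ b % k) : Function.Injective (bdOfWord a b k) :=
  Function.LeftInverse.injective (g := List.map _) (map_residue_bdOfWord hne)

lemma bijOn_bdOfFinset (ha : 1 ≤ a) (hab : a < b) (hbk : b ≤ k) {m : ℕ} (hm : m ≠ 0) :
    Set.BijOn (bdOfFinset a b k m) (range m).powerset {l | memBD a b k m l} := by
  have hne := mod_ne_mod_of_lt ha hab hbk
  refine ⟨fun S _ => ?_, fun S hS T hT hST => ?_, fun l hl => ?_⟩
  · have := memBD_bdOfWord ha hab hbk (w := (List.range m).map (· ∈ S)) (by simpa using hm)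
    rwa [List.length_map, List.length_range] at this
  · have hw := List.map_inj_left.mp (bdOfWord_injective hne hST)
    simp only [coe_powerset, Set.mem_preimage, Set.mem_powerset_iff, coe_subset] at hS hT
    ext i
    by_cases him : i < m
    · simpa using hw i (List.mem_range.mpr him)
    · exact iff_of_false (fun h => him (mem_range.mp (hS h))) (fun h => him (mem_range.mp (hT h)))
  · obtain ⟨-, hlen, hparts, hlast, hchain⟩ := hl
    have hw := bdOfWord_map_residue ha hab hbk (fun x hx => (hparts x hx).2) hlast hchain
    generalize l.map (fun x => decide (x % k = b % k)) = w at hw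
    refine ⟨{i ∈ range m | w.getD i false}, mem_coe.mpr (mem_powerset.mpr (filter_subset _ _)), ?_⟩
    rw [bdOfFinset, ← hw]
    congr 1
    have hwl : w.length = m := by rw [← length_bdOfWord (a := a) (b := b) (k := k), hw, hlen]
    conv_rhs => rw [← map_range_getD w false, hwl]
    refine List.map_congr_left fun i hi => ?_
    simp [List.mem_range.mp hi]

theorem finsum_memBD_eq_prod (ha : 1 ≤ a) (hab : a < b) (hbk : b ≤ k) {m : ℕ} (hm : m ≠ 0)
    (q u v : ℂ) :
    ∑ᶠ l ∈ {l | memBD a b k m l}, u ^ lcount k a l * v ^ lcount k b l * q ^ l.sum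
      = ∏ i ∈ range m, (v * q ^ (b + 2 * k * i) + u * q ^ (a + k * i)) := by
  rw [prod_add, ← finsum_mem_coe_finset]
  exact (finsum_mem_eq_of_bijOn _ (bijOn_bdOfFinset ha hab hbk hm) fun S hS =>
    (weight_bdOfFinset (mod_ne_mod_of_lt ha hab hbk) (mem_powerset.mp hS) q u v).symm).symm

end BD

/-- Generating function for the partitions in `BD_{a,b,k}(m)`:
`Σ_{λ ∈ BD_{a,b,k}(m)} u^{ℓ_a} v^{ℓ_b} q^{|λ|}
  = Σ_{h=0}^{m} u^{m-h} v^h q^{k C(m,2) + k C(h,2) + ma + (b-a)h} [m, h]_k`. -/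
theorem gen_BD_m (a b k m : ℕ) (ha : 1 ≤ a) (hab : a < b) (hbk : b ≤ k)
    (hm : 1 ≤ m) (q u v : ℂ) (hq : ‖q‖ < 1) :
    ∑ᶠ l ∈ {l : List ℕ | memBD a b k m l},
        u ^ lcount k a l * v ^ lcount k b l * q ^ l.sum
      = ∑ h ∈ Finset.range (m + 1), u ^ (m - h) * v ^ h *
          q ^ (k * Nat.choose m 2 + k * Nat.choose h 2 + m * a + (b - a) * h) *
          gbinom (q ^ k) m h := by
  have hQ : ‖q ^ k‖ < 1 := by
    rw [norm_pow]
    exact pow_lt_one₀ (norm_nonneg q) hq (by omega)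
  have hfactor : ∀ i, v * q ^ (b + 2 * k * i) + u * q ^ (a + k * i)
      = (q ^ k) ^ i * (v * q ^ b * (q ^ k) ^ i + u * q ^ a) := fun i => by ring
  rw [finsum_memBD_eq_prod ha hab hbk (by omega), prod_congr rfl fun i _ => hfactor i,
    prod_mul_distrib, prod_pow_eq_pow_sum, sum_range_id, ← Nat.choose_two_right,
    prod_mul_pow_add_eq_sum_gbinom hQ, mul_sum]
  refine sum_congr rfl fun h hh => ?_
  obtain ⟨n, rfl⟩ := Nat.exists_eq_add_of_le (Nat.lt_succ_iff.mp (mem_range.mp hh))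
  obtain ⟨d, rfl⟩ := Nat.exists_eq_add_of_le hab.le
  simp only [Nat.add_sub_cancel_left]
  ring
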